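/- Let B be a block and let G be obtained from B by attaching whiskers to the vertices v_1, ..., v_k of B, with k < n = |V(B)|. If G is combinatorially unmixed, then for every subset S ⊆ {v_1, ..., v_k}, the induced subgraph B \ S is connected. -/

import Mathlib

open SimpleGraph Finset

variable {V : Type*}

/-- Number of connected components of the induced subgraph on the complement of `S`. -/
noncomputable def ncomp (G : SimpleGraph V) (S : Finset V) : ℕ :=
  Nat.card ((G.induce {v | v ∉ S}).ConnectedComponent)

/-- `S` is a cut set of `G`. -/
def cutSet [DecidableEq V] (G : SimpleGraph V) (S : Finset V) : Prop :=
  S = ∅ ∨ ∀ i ∈ S, ncomp G (S.erase i) < ncomp G S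

/-- `G` is combinatorially unmixed. -/
def unmixed [DecidableEq V] (G : SimpleGraph V) : Prop :=
  G.Connected ∧ ∀ S : Finset V, cutSet G S → ncomp G S = S.card + 1

/-- `G` is accessible. -/
def accessible [DecidableEq V] (G : SimpleGraph V) : Prop :=
  unmixed G ∧ ∀ S : Finset V, cutSet G S → S ≠ ∅ → ∃ s ∈ S, cutSet G (S.erase s)

/-- A block: connected with no cut vertices. -/
def isBlock [DecidableEq V] (G : SimpleGraph V) : Prop :=
  G.Connected ∧ ∀ v : V, ¬ cutSet G {v}

/-- The graph obtained from `B` by attaching a whisker (pendant leaf) at each `f i`. -/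
def whisker {k : ℕ} (B : SimpleGraph V) (f : Fin k → V) : SimpleGraph (V ⊕ Fin k) :=
  SimpleGraph.fromRel (fun x y => match x, y with
    | Sum.inl a, Sum.inl b => B.Adj a b
    | Sum.inl a, Sum.inr i => a = f i
    | _, _ => False)

/-- A free vertex: a vertex contained in a unique maximal clique. -/
def freeVertex (G : SimpleGraph V) (v : V) : Prop :=
  ∃! s : Set V, v ∈ s ∧ G.IsClique s ∧ ∀ t, G.IsClique t → s ⊆ t → s = t

/-! If `S ⊆ {v₁, …, vₖ}` is minimal with `B \ S` disconnected, then `S`, viewed in `G`, is a cut set: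
deleting it leaves the components of `B \ S` plus one isolated leaf per whisker at `S`, and putting
back any `s ∈ S` reconnects `B`. Since there are at least `|S|` whiskers at `S`, unmixedness gives
`c(B \ S) + |S| ≤ |S| + 1`, so `B \ S` is connected after all. -/

namespace SimpleGraph

variable {W : Type*} {G : SimpleGraph W}

lemma connected_iff_natCard_connectedComponent_eq_one :
    G.Connected ↔ Nat.card G.ConnectedComponent = 1 := by
  rw [Nat.card_eq_one_iff_unique]
  refine ⟨fun h => ⟨h.preconnected.subsingleton_connectedComponent,
    h.nonempty.map G.connectedComponentMk⟩, ?_⟩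
  rintro ⟨_, ⟨c⟩⟩
  have : Nonempty W := c.ind fun v => ⟨v⟩
  exact ⟨fun u v => ConnectedComponent.exact (Subsingleton.elim _ _)⟩

lemma Reachable.eq_of_forall_adj {β : Sort*} {φ : W → β} (h : ∀ v w, G.Adj v w → φ v = φ w)
    {v w : W} (hvw : G.Reachable v w) : φ v = φ w := by
  obtain ⟨p⟩ := hvw
  induction p with
  | nil => rfl
  | cons hadj _ ih => exact (h _ _ hadj).trans ih

end SimpleGraph

lemma Finset.card_le_natCard_preimage {α ι : Type*} [Finite ι] {f : ι → α} {S : Finset α}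
    (hS : ↑S ⊆ Set.range f) : #S ≤ Nat.card (f ⁻¹' S) := by
  rw [← Nat.card_eq_finsetCard]
  refine Nat.card_le_card_of_surjective (fun i => ⟨f i, i.2⟩) fun ⟨v, hv⟩ => ?_
  obtain ⟨i, rfl⟩ := hS hv
  exact ⟨⟨i, hv⟩, rfl⟩

section Whisker

variable {k : ℕ} (B : SimpleGraph V) (f : Fin k → V)

@[simp] lemma whisker_adj_inl_inl {a b : V} : (whisker B f).Adj (.inl a) (.inl b) ↔ B.Adj a b := by
  simp only [whisker, fromRel_adj, ne_eq, Sum.inl.injEq]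
  exact ⟨fun ⟨_, h⟩ => h.elim id (·.symm), fun h => ⟨h.ne, .inl h⟩⟩

@[simp] lemma whisker_adj_inl_inr {a : V} {i : Fin k} :
    (whisker B f).Adj (.inl a) (.inr i) ↔ a = f i := by
  simp [whisker]

@[simp] lemma whisker_adj_inr_inl {a : V} {i : Fin k} :
    (whisker B f).Adj (.inr i) (.inl a) ↔ a = f i := by
  rw [adj_comm, whisker_adj_inl_inr]

@[simp] lemma not_whisker_adj_inr_inr {i j : Fin k} : ¬ (whisker B f).Adj (.inr i) (.inr j) := by
  simp [whisker]

def whiskerInl : B ↪g whisker B f := ⟨.inl, whisker_adj_inl_inl B f⟩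

variable [DecidableEq V] (S : Finset V)

def whiskerProj :
    {y : V ⊕ Fin k | y ∉ S.map .inl} → (B.induce {v | v ∉ S}).ConnectedComponent ⊕ f ⁻¹' S
  | ⟨.inl v, hv⟩ => .inl (connectedComponentMk _ ⟨v, by simpa using hv⟩)
  | ⟨.inr i, _⟩ => if h : f i ∈ S then .inr ⟨i, h⟩ else .inl (connectedComponentMk _ ⟨f i, h⟩)

lemma whiskerProj_eq_of_adj : ∀ x y, ((whisker B f).induce {y | y ∉ S.map .inl}).Adj x y →
    whiskerProj B f S x = whiskerProj B f S y
  | ⟨.inl a, _⟩, ⟨.inl b, _⟩, hab =>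
    congrArg Sum.inl <|
      ConnectedComponent.connectedComponentMk_eq_of_adj ((whisker_adj_inl_inl B f).mp hab)
  | ⟨.inl a, ha⟩, ⟨.inr i, _⟩, hai => by
    obtain rfl : a = f i := (whisker_adj_inl_inr B f).mp hai
    have : f i ∉ S := by simpa using ha
    simp [whiskerProj, this]
  | ⟨.inr i, _⟩, ⟨.inl a, ha⟩, hia => by
    obtain rfl : a = f i := (whisker_adj_inr_inl B f).mp hia
    have : f i ∉ S := by simpa using ha
    simp [whiskerProj, this]
  | ⟨.inr _, _⟩, ⟨.inr _, _⟩, h => (not_whisker_adj_inr_inr B f h).elim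

def whiskerComponentEquiv :
    ((whisker B f).induce {y | y ∉ S.map .inl}).ConnectedComponent ≃
      (B.induce {v | v ∉ S}).ConnectedComponent ⊕ f ⁻¹' S where
  toFun := ConnectedComponent.lift (whiskerProj B f S) fun _ _ p _ =>
    p.reachable.eq_of_forall_adj (whiskerProj_eq_of_adj B f S)
  invFun := Sum.elim
    (ConnectedComponent.map <|
      induceHom (whiskerInl B f).toHom fun v hv => by simpa [whiskerInl] using hv)
    fun i => connectedComponentMk _ ⟨.inr i, by simp⟩
  left_inv := by
    refine ConnectedComponent.ind ?_
    rintro ⟨v | i, hx⟩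
    · rfl
    · by_cases h : f i ∈ S
      · simp [whiskerProj, h]
      · simp only [ConnectedComponent.lift_mk, whiskerProj, dif_neg h, Sum.elim_inl,
          ConnectedComponent.map_mk]
        exact ConnectedComponent.connectedComponentMk_eq_of_adj
          ((whisker_adj_inl_inr B f).mpr rfl)
  right_inv := by
    rintro (c | ⟨i, h⟩)
    · exact c.ind fun _ => rfl
    · simp [whiskerProj, show f i ∈ S from h]

lemma ncomp_whisker_map_inl [Finite V] :
    ncomp (whisker B f) (S.map .inl) = Nat.card (B.induce {v | v ∉ S}).ConnectedComponent +
      Nat.card (f ⁻¹' S) := by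
  rw [ncomp, Nat.card_congr (whiskerComponentEquiv B f S), Nat.card_sum]

lemma cutSet_whisker_map_inl [Finite V]
    (hconn : ∀ s ∈ S, (B.induce {v | v ∉ S.erase s}).Connected)
    (hS : 1 < Nat.card (B.induce {v | v ∉ S}).ConnectedComponent) :
    cutSet (whisker B f) (S.map .inl) := by
  refine .inr fun x hx => ?_
  obtain ⟨s, hs, rfl⟩ := mem_map.mp hx
  have hleaves : Nat.card (f ⁻¹' ↑(S.erase s)) ≤ Nat.card (f ⁻¹' S) :=
    Nat.card_mono (Set.toFinite _) (Set.preimage_mono (coe_subset.mpr (erase_subset s S)))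
  rw [← map_erase, ncomp_whisker_map_inl, ncomp_whisker_map_inl,
    connected_iff_natCard_connectedComponent_eq_one.mp (hconn s hs)]
  omega

end Whisker

theorem whisker_unmixed_remove_whiskered_connected_general [Fintype V] [DecidableEq V] {k : ℕ}
    (B : SimpleGraph V) (f : Fin k → V)
    (hk : k < Fintype.card V) (hu : unmixed (whisker B f)) :
    ∀ S : Finset V, ↑S ⊆ Set.range f → (B.induce {v | v ∉ S}).Connected := by
  intro S
  induction S using Finset.strongInduction with
  | H S ih =>
  intro hS
  have hleaves : #S ≤ Nat.card (f ⁻¹' S) := S.card_le_natCard_preimage hS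
  have hleaves_le : Nat.card (f ⁻¹' S) ≤ k :=
    (Nat.card_mono Set.finite_univ (Set.subset_univ _)).trans_eq (by simp)
  have : Nonempty {v | v ∉ S} := by
    obtain ⟨v, -, hv⟩ := exists_mem_notMem_of_card_lt_card (s := S) (t := univ)
      (by rw [card_univ]; omega)
    exact ⟨⟨v, hv⟩⟩
  have hpos : 0 < Nat.card (B.induce {v | v ∉ S}).ConnectedComponent := Nat.card_pos
  rw [connected_iff_natCard_connectedComponent_eq_one]
  by_contra hne
  have hcut : cutSet (whisker B f) (S.map .inl) := cutSet_whisker_map_inl B f S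
    (fun s hs => ih _ (erase_ssubset hs) ((coe_subset.mpr (erase_subset s S)).trans hS))
    (by omega)
  have hcount := hu.2 _ hcut
  rw [ncomp_whisker_map_inl, card_map] at hcount
  omega

theorem whisker_unmixed_remove_whiskered_connected [Fintype V] [DecidableEq V] {k : ℕ}
    (B : SimpleGraph V) (hB : isBlock B) (f : Fin k → V) (hf : Function.Injective f)
    (hk : k < Fintype.card V) (hu : unmixed (whisker B f)) :
    ∀ S : Finset V, ↑S ⊆ Set.range f → (B.induce {v | v ∉ S}).Connected :=
  whisker_unmixed_remove_whiskered_connected_general B f hk hu
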